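/- arXiv:2105.00287 — 8 statements merged into one kernel-verified Lean document; each statement's English description precedes it below -/
import Mathlib

section
/- Let δ ∈ (0,1) and let z ∈ ℂ satisfy |z − 1| ≤ δ·|z + 1|. Then z ≠ 0, Re(z) > 0, and the principal argument of z (taken in (−π, π]) satisfies |Arg(z)| ≤ 2·arctan(δ). -/
open Real

/-- For `δ ∈ (0,1)` and `z` with `|z − 1| ≤ δ|z + 1|`: `z ≠ 0`, `Re(z) > 0`, and the
principal argument of `z` satisfies `|Arg(z)| ≤ 2·arctan(δ)`. -/
theorem region_arg_bound (δ : ℝ) (hδ0 : 0 < δ) (hδ1 : δ < 1) (z : ℂ)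
    (hz : ‖z - 1‖ ≤ δ * ‖z + 1‖) :
    z ≠ 0 ∧ 0 < z.re ∧ |Complex.arg z| ≤ 2 * Real.arctan δ := by
  have hδsq : δ ^ 2 < 1 := by nlinarith
  set x := z.re with hxdef
  set y := z.im with hydef
  have e1 : ‖z - 1‖ ^ 2 = (x - 1) ^ 2 + y ^ 2 := by
    rw [Complex.sq_norm, Complex.normSq_apply]
    simp
    ring
  have e2 : ‖z + 1‖ ^ 2 = (x + 1) ^ 2 + y ^ 2 := by
    rw [Complex.sq_norm, Complex.normSq_apply]
    simp
    ring
  have hsq : ‖z - 1‖ ^ 2 ≤ (δ * ‖z + 1‖) ^ 2 := by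
    have h0 := norm_nonneg (z - 1)
    nlinarith [hz]
  have h1 : (x - 1) ^ 2 + y ^ 2 ≤ δ ^ 2 * ((x + 1) ^ 2 + y ^ 2) := by
    rw [e1] at hsq
    rw [mul_pow, e2] at hsq
    exact hsq
  have hx : 0 < x := by
    nlinarith [sq_nonneg x, sq_nonneg y, mul_nonneg (le_of_lt (sub_pos.2 hδsq)) (sq_nonneg x),
      mul_nonneg (le_of_lt (sub_pos.2 hδsq)) (sq_nonneg y)]
  have hz0 : z ≠ 0 := by
    intro h
    rw [hxdef, h, Complex.zero_re] at hx
    exact lt_irrefl 0 hx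
  refine ⟨hz0, hx, ?_⟩
  have h3 : 0 ≤ (1 - δ ^ 2) * (δ ^ 2 * ((x + 1) ^ 2 + y ^ 2) - ((x - 1) ^ 2 + y ^ 2)) :=
    mul_nonneg (by linarith) (by linarith)
  have h2 : ((1 - δ ^ 2) * |y|) ^ 2 ≤ (2 * δ * x) ^ 2 := by
    calc ((1 - δ ^ 2) * |y|) ^ 2 = (1 - δ ^ 2) ^ 2 * y ^ 2 := by rw [mul_pow, sq_abs]
    _ ≤ (2 * δ * x) ^ 2 := by nlinarith [h3, sq_nonneg ((1 + δ ^ 2) * x - (1 - δ ^ 2))]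
  have hA : 0 ≤ (1 - δ ^ 2) * |y| := mul_nonneg (by linarith) (abs_nonneg y)
  have hB : 0 ≤ 2 * δ * x := by positivity
  have hy : (1 - δ ^ 2) * |y| ≤ 2 * δ * x := by nlinarith [h2, hA, hB]
  have habs : |Complex.arg z| < Real.pi / 2 :=
    Complex.abs_arg_lt_pi_div_two_iff.2 (Or.inl hx)
  obtain ⟨ha1, ha2⟩ := abs_lt.1 habs
  have harg : Real.arctan (y / x) = Complex.arg z := by
    rw [hxdef, hydef, ← Complex.tan_arg]
    exact Real.arctan_tan ha1 ha2
  have hsub : (0:ℝ) < 1 - δ ^ 2 := by linarith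
  have key : |y / x| ≤ 2 * δ / (1 - δ ^ 2) := by
    rw [abs_div, abs_of_pos hx, div_le_div_iff₀ hx hsub]
    nlinarith [hy]
  have h2a : Real.arctan δ < Real.pi / 4 := by
    have := Real.arctan_one ▸ Real.arctan_strictMono hδ1
    linarith
  have h2b : 0 < Real.arctan δ := by
    have := Real.arctan_zero ▸ Real.arctan_strictMono hδ0
    linarith
  have htan : Real.tan (2 * Real.arctan δ) = 2 * δ / (1 - δ ^ 2) := by
    rw [Real.tan_two_mul, Real.tan_arctan]
  have hatan_eq : Real.arctan (2 * δ / (1 - δ ^ 2)) = 2 * Real.arctan δ := by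
    rw [← htan]
    exact Real.arctan_tan (by linarith [Real.pi_pos]) (by linarith)
  rw [← harg]
  obtain ⟨kl, ku⟩ := abs_le.1 key
  rw [abs_le]
  constructor
  · have := Real.arctan_strictMono.monotone kl
    rw [Real.arctan_neg, hatan_eq] at this
    linarith
  · have := Real.arctan_strictMono.monotone ku
    rw [hatan_eq] at this
    linarith
end

section
/- Let d ≥ 2 be an integer and set ε = tan(π/(4d)). Let 1 ≤ k ≤ d and let w_1, …, w_k ∈ ℂ each satisfy |w_j − 1| ≤ ε·|w_j + 1|. Then the product w_1 · w_2 ⋯ w_k is nonzero and has nonnegative real part. -/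
/-!
Clearing denominators in `‖w - 1‖ ≤ tan θ * ‖w + 1‖` and expanding both squared norms gives
`cos (2θ) * (‖w‖² + 1) ≤ 2 * re w`; since `‖w‖² + 1 ≥ 2‖w‖`, this says `re w ≥ cos (2θ) * ‖w‖`,
i.e. `|arg w| ≤ 2θ`. For `θ = π / (4d)` the arguments of at most `d` such factors add up to at
most `π / 2` in absolute value, and the real part of the product is `∏ ‖w j‖ * cos (∑ arg (w j))`.
-/

open Complex Finset Real

lemma cos_two_mul_mul_sq_norm_add_one_le_two_mul_re {θ : ℝ} (hθ : 0 < Real.cos θ) {w : ℂ}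
    (hw : ‖w - 1‖ ≤ Real.tan θ * ‖w + 1‖) :
    Real.cos (2 * θ) * (‖w‖ ^ 2 + 1) ≤ 2 * w.re := by
  have hcos : Real.cos θ * ‖w - 1‖ ≤ Real.sin θ * ‖w + 1‖ := by
    rw [Real.tan_eq_sin_div_cos, div_mul_eq_mul_div, le_div_iff₀ hθ] at hw
    linarith
  have hsq : Real.cos θ ^ 2 * ‖w - 1‖ ^ 2 ≤ Real.sin θ ^ 2 * ‖w + 1‖ ^ 2 := by
    rw [← mul_pow, ← mul_pow]
    exact pow_le_pow_left₀ (by positivity) hcos 2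
  have hsub : ‖w - 1‖ ^ 2 = ‖w‖ ^ 2 - 2 * w.re + 1 := by
    simp only [Complex.sq_norm, Complex.normSq_apply, sub_re, sub_im, one_re, one_im]
    ring
  have hadd : ‖w + 1‖ ^ 2 = ‖w‖ ^ 2 + 2 * w.re + 1 := by
    simp only [Complex.sq_norm, Complex.normSq_apply, add_re, add_im, one_re, one_im]
    ring
  rw [hsub, hadd] at hsq
  rw [Real.cos_two_mul]
  linear_combination hsq + (‖w‖ ^ 2 + 2 * w.re + 1) * Real.sin_sq_add_cos_sq θ

lemma mul_norm_le_re_of_mul_sq_norm_add_one_le {c : ℝ} (hc : 0 ≤ c) {w : ℂ}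
    (hw : c * (‖w‖ ^ 2 + 1) ≤ 2 * w.re) : c * ‖w‖ ≤ w.re := by
  nlinarith [sq_nonneg (‖w‖ - 1)]

lemma abs_arg_le_of_cos_mul_norm_le_re {φ : ℝ} (hφ₀ : 0 ≤ φ) (hφ : φ ≤ π) {w : ℂ} (hw : w ≠ 0)
    (h : Real.cos φ * ‖w‖ ≤ w.re) : |arg w| ≤ φ := by
  have hcos : Real.cos φ ≤ Real.cos |arg w| := by
    rwa [Real.cos_abs, cos_arg hw, le_div_iff₀ (norm_pos_iff.2 hw)]
  exact (strictAntiOn_cos.le_iff_ge ⟨hφ₀, hφ⟩ ⟨abs_nonneg _, abs_arg_le_pi w⟩).1 hcos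

lemma re_pos_and_abs_arg_le_of_norm_sub_one_le_tan_mul {θ : ℝ} (hθ₀ : 0 ≤ θ) (hθ : θ < π / 4)
    {w : ℂ} (hw : ‖w - 1‖ ≤ Real.tan θ * ‖w + 1‖) : 0 < w.re ∧ |arg w| ≤ 2 * θ := by
  have hcos : 0 < Real.cos θ := Real.cos_pos_of_mem_Ioo ⟨by linarith [pi_pos], by linarith⟩
  have hcos₂ : 0 < Real.cos (2 * θ) := Real.cos_pos_of_mem_Ioo ⟨by linarith [pi_pos], by linarith⟩
  have hdisk := cos_two_mul_mul_sq_norm_add_one_le_two_mul_re hcos hw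
  have hre : 0 < w.re := by nlinarith [sq_nonneg ‖w‖]
  have hw₀ : w ≠ 0 := fun h => by simp [h] at hre
  exact ⟨hre, abs_arg_le_of_cos_mul_norm_le_re (by linarith) (by linarith [pi_pos]) hw₀
    (mul_norm_le_re_of_mul_sq_norm_add_one_le hcos₂.le hdisk)⟩

lemma re_prod_eq_prod_norm_mul_cos_sum_arg {ι : Type*} (s : Finset ι) (w : ι → ℂ) :
    (∏ j ∈ s, w j).re = (∏ j ∈ s, ‖w j‖) * Real.cos (∑ j ∈ s, arg (w j)) := by
  have hpolar : ∏ j ∈ s, w j =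
      ((∏ j ∈ s, ‖w j‖ : ℝ) : ℂ) * exp (((∑ j ∈ s, arg (w j) : ℝ) : ℂ) * I) := by
    simp only [ofReal_prod, ofReal_sum, sum_mul, Complex.exp_sum, ← prod_mul_distrib,
      norm_mul_exp_arg_mul_I]
  rw [hpolar, re_ofReal_mul, exp_ofReal_mul_I_re]

lemma re_prod_nonneg_of_sum_abs_arg_le {ι : Type*} (s : Finset ι) (w : ι → ℂ)
    (h : ∑ j ∈ s, |arg (w j)| ≤ π / 2) : 0 ≤ (∏ j ∈ s, w j).re := by
  rw [re_prod_eq_prod_norm_mul_cos_sum_arg]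
  have hsum := (abs_sum_le_sum_abs _ s).trans h
  exact mul_nonneg (prod_nonneg fun j _ => norm_nonneg _)
    (Real.cos_nonneg_of_mem_Icc (abs_le.1 hsum))

theorem product_in_halfplane_general (d : ℕ) (hd : 2 ≤ d) (ε : ℝ)
    (hε : ε = Real.tan (Real.pi / (4 * (d : ℝ))))
    (k : ℕ) (hkd : k ≤ d) (w : Fin k → ℂ)
    (hw : ∀ j, ‖w j - 1‖ ≤ ε * ‖w j + 1‖) :
    (∏ j, w j) ≠ 0 ∧ 0 ≤ (∏ j, w j).re := by
  have hd' : (2 : ℝ) ≤ d := by exact_mod_cast hd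
  have hθ₀ : 0 ≤ π / (4 * d) := by positivity
  have hθ : π / (4 * d) < π / 4 := div_lt_div_of_pos_left pi_pos (by norm_num) (by linarith)
  have hreg j := re_pos_and_abs_arg_le_of_norm_sub_one_le_tan_mul hθ₀ hθ (hε ▸ hw j)
  refine ⟨prod_ne_zero_iff.2 fun j _ h => by simpa [h] using (hreg j).1,
    re_prod_nonneg_of_sum_abs_arg_le _ _ ?_⟩
  calc ∑ j, |arg (w j)| ≤ ∑ _j : Fin k, 2 * (π / (4 * d)) := sum_le_sum fun j _ => (hreg j).2
    _ = k * (2 * (π / (4 * d))) := by simp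
    _ ≤ d * (2 * (π / (4 * d))) := by gcongr
    _ = π / 2 := by field_simp; ring

/-- A product of `1 ≤ k ≤ d` complex numbers, each in the region
`R(tan(π/(4d))) = {w : |w − 1| ≤ tan(π/(4d))·|w + 1|}`, is nonzero and has
nonnegative real part. -/
theorem product_in_halfplane (d : ℕ) (hd : 2 ≤ d) (ε : ℝ)
    (hε : ε = Real.tan (Real.pi / (4 * (d : ℝ))))
    (k : ℕ) (hk1 : 1 ≤ k) (hkd : k ≤ d) (w : Fin k → ℂ)
    (hw : ∀ j, ‖w j - 1‖ ≤ ε * ‖w j + 1‖) :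
    (∏ j, w j) ≠ 0 ∧ 0 ≤ (∏ j, w j).re :=
  product_in_halfplane_general d hd ε hε k hkd w hw
end

section
/- Let Δ ≥ 3 be an integer, set d = Δ − 1 and ε = tan(π/(4d)). Let 1 ≤ k ≤ Δ and let w_1, …, w_k ∈ ℂ each satisfy |w_j − 1| ≤ ε·|w_j + 1|. Then the product w_1 · w_2 ⋯ w_k is not a real number ≤ 0; in particular w_1 ⋯ w_k ≠ −1. -/
/-!
Writing `ε = tan θ` with `0 ≤ θ < π/4`, the condition `|w - 1| ≤ ε |w + 1|` forces `Re w > 0` and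
`|Im w| ≤ tan (2θ) · Re w`, i.e. `|arg w| ≤ 2θ`. With `θ = π/(4d)` the arguments of at most
`d + 1` factors add up to at most `(d + 1)π/(2d) < π` (as `d ≥ 2`), so the product
`exp (∑ log w_j)` has argument in `(-π, π)` and cannot be a nonpositive real.
-/

open Real

lemma Real.tan_lt_one_of_lt_pi_div_four {θ : ℝ} (hθ0 : 0 ≤ θ) (hθ : θ < π / 4) : tan θ < 1 := by
  simpa using tan_lt_tan_of_nonneg_of_lt_pi_div_two hθ0 (by linarith) hθ

namespace Complex

variable {z : ℂ} {ε : ℝ}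

lemma re_im_sq_le_of_norm_sub_one_le (h : ‖z - 1‖ ≤ ε * ‖z + 1‖) :
    (z.re - 1) ^ 2 + z.im ^ 2 ≤ ε ^ 2 * ((z.re + 1) ^ 2 + z.im ^ 2) := by
  have hsq := pow_le_pow_left₀ (norm_nonneg _) h 2
  rw [mul_pow, Complex.sq_norm, Complex.sq_norm] at hsq
  simpa [normSq_apply, sq] using hsq

lemma ne_zero_of_norm_sub_one_le (hε1 : ε < 1) (h : ‖z - 1‖ ≤ ε * ‖z + 1‖) : z ≠ 0 := by
  rintro rfl
  norm_num at h
  linarith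

lemma re_pos_of_norm_sub_one_le (hε0 : 0 ≤ ε) (hε1 : ε < 1)
    (h : ‖z - 1‖ ≤ ε * ‖z + 1‖) : 0 < z.re := by
  have hden : 0 < 1 - ε ^ 2 := by nlinarith
  nlinarith [re_im_sq_le_of_norm_sub_one_le h,
    mul_pos hden (by positivity : (0 : ℝ) < z.re ^ 2 + z.im ^ 2 + 1)]

lemma abs_im_mul_le_of_norm_sub_one_le (hε0 : 0 ≤ ε) (hε1 : ε < 1)
    (h : ‖z - 1‖ ≤ ε * ‖z + 1‖) : |z.im| * (1 - ε ^ 2) ≤ 2 * ε * z.re := by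
  have hq := re_im_sq_le_of_norm_sub_one_le h
  have hre := re_pos_of_norm_sub_one_le hε0 hε1 h
  have hden : 0 < 1 - ε ^ 2 := by nlinarith
  have hsq : (z.im * (1 - ε ^ 2)) ^ 2 ≤ (2 * ε * z.re) ^ 2 := by
    nlinarith [sq_nonneg ((1 + ε ^ 2) * z.re - (1 - ε ^ 2))]
  rw [← abs_of_pos hden, ← abs_mul]
  exact abs_le_of_sq_le_sq hsq (by positivity)

lemma abs_arg_le_of_abs_im_le_tan_mul_re {φ : ℝ} (hφ0 : 0 ≤ φ) (hφ : φ < π / 2)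
    (hre : 0 < z.re) (him : |z.im| ≤ Real.tan φ * z.re) : |arg z| ≤ φ := by
  have harg : arg z ∈ Set.Ioo (-(π / 2)) (π / 2) :=
    abs_lt.mp (abs_arg_lt_pi_div_two_iff.mpr (Or.inl hre))
  have htan : |Real.tan (arg z)| ≤ Real.tan φ := by
    rwa [tan_arg, abs_div, abs_of_pos hre, div_le_iff₀ hre]
  have hφ_mem : ∀ ψ, |ψ| ≤ φ → ψ ∈ Set.Ioo (-(π / 2)) (π / 2) := fun ψ hψ =>
    abs_lt.mp (hψ.trans_lt hφ)
  rw [abs_le]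
  constructor
  · refine (strictMonoOn_tan.le_iff_le (hφ_mem _ (by simp [abs_of_nonneg hφ0])) harg).mp ?_
    rw [Real.tan_neg]
    linarith [neg_abs_le (Real.tan (arg z))]
  · refine (strictMonoOn_tan.le_iff_le harg (hφ_mem _ (abs_of_nonneg hφ0).le)).mp ?_
    exact (le_abs_self _).trans htan

lemma exp_ne_ofReal_of_nonpos {r : ℝ} (hz : |z.im| < π) (hr : r ≤ 0) : exp z ≠ r := by
  intro h
  rcases hr.lt_or_eq with hr | rfl
  · have : arg (exp z) = z.im := by
      rw [arg_exp, toIocMod_eq_self]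
      constructor <;> linarith [abs_lt.mp hz]
    rw [h, arg_ofReal_of_neg hr] at this
    linarith [le_abs_self z.im]
  · exact exp_ne_zero z (by simp at h)

lemma abs_arg_le_two_mul_of_norm_sub_one_le_tan {θ : ℝ} (hθ0 : 0 ≤ θ) (hθ : θ < π / 4)
    (h : ‖z - 1‖ ≤ Real.tan θ * ‖z + 1‖) : |arg z| ≤ 2 * θ := by
  have hε0 : 0 ≤ Real.tan θ := tan_nonneg_of_nonneg_of_le_pi_div_two hθ0 (by linarith)
  have hε1 := tan_lt_one_of_lt_pi_div_four hθ0 hθ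
  have hre := re_pos_of_norm_sub_one_le hε0 hε1 h
  refine abs_arg_le_of_abs_im_le_tan_mul_re (by positivity) (by linarith) hre ?_
  rw [Real.tan_two_mul, div_mul_eq_mul_div, le_div_iff₀ (by nlinarith)]
  exact abs_im_mul_le_of_norm_sub_one_le hε0 hε1 h

lemma prod_ne_ofReal_of_nonpos {ι : Type*} {s : Finset ι} {w : ι → ℂ} (hw : ∀ i ∈ s, w i ≠ 0)
    (harg : ∑ i ∈ s, |arg (w i)| < π) {r : ℝ} (hr : r ≤ 0) : ∏ i ∈ s, w i ≠ r := by
  have hprod : ∏ i ∈ s, w i = exp (∑ i ∈ s, log (w i)) := by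
    rw [exp_sum]
    exact Finset.prod_congr rfl fun i hi => (exp_log (hw i hi)).symm
  have him : |(∑ i ∈ s, log (w i)).im| < π := by
    simp only [im_sum, log_im]
    exact (Finset.abs_sum_le_sum_abs _ _).trans_lt harg
  rw [hprod]
  exact exp_ne_ofReal_of_nonpos him hr

end Complex

open Complex

theorem product_ne_nonpos_real_general (Δ : ℕ) (hΔ : 3 ≤ Δ) (d : ℕ) (hd : d = Δ - 1)
    (ε : ℝ) (hε : ε = Real.tan (Real.pi / (4 * (d : ℝ))))
    (k : ℕ) (hkΔ : k ≤ Δ) (w : Fin k → ℂ)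
    (hw : ∀ j, ‖w j - 1‖ ≤ ε * ‖w j + 1‖) :
    (∀ r : ℝ, r ≤ 0 → (∏ j, w j) ≠ (r : ℂ)) ∧ (∏ j, w j) ≠ -1 := by
  subst hε
  have hd2 : (2 : ℝ) ≤ d := by exact_mod_cast (by omega : 2 ≤ d)
  have hkd : (k : ℝ) ≤ d + 1 := by exact_mod_cast (by omega : k ≤ d + 1)
  set θ := π / (4 * (d : ℝ)) with hθ
  have hθ0 : 0 ≤ θ := by positivity
  have hθπ : θ < π / 4 := by
    rw [hθ, div_lt_div_iff₀ (by positivity) (by norm_num)]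
    nlinarith [pi_pos]
  have harg : ∀ j, |arg (w j)| ≤ 2 * θ := fun j =>
    abs_arg_le_two_mul_of_norm_sub_one_le_tan hθ0 hθπ (hw j)
  have hne : ∀ j, w j ≠ 0 := fun j =>
    ne_zero_of_norm_sub_one_le (tan_lt_one_of_lt_pi_div_four hθ0 hθπ) (hw j)
  have hsum : ∑ j, |arg (w j)| < π := calc
    ∑ j, |arg (w j)| ≤ ∑ _j : Fin k, 2 * θ := Finset.sum_le_sum fun j _ => harg j
    _ = k * π / (2 * d) := by
      rw [Finset.sum_const, Finset.card_univ, Fintype.card_fin, nsmul_eq_mul, hθ]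
      field_simp
      ring
    _ < π := by rw [div_lt_iff₀ (by positivity)]; nlinarith [pi_pos]
  have hnonpos : ∀ r : ℝ, r ≤ 0 → (∏ j, w j) ≠ (r : ℂ) := fun r hr =>
    prod_ne_ofReal_of_nonpos (fun j _ => hne j) hsum hr
  exact ⟨hnonpos, by simpa using hnonpos (-1) (by norm_num)⟩

/-- For `Δ ≥ 3`, `d = Δ − 1`, `ε = tan(π/(4d))`: a product of `1 ≤ k ≤ Δ` complex
numbers, each in the region `R(ε) = {w : |w − 1| ≤ ε·|w + 1|}`, is not a real number
`≤ 0`; in particular it is not `−1`. -/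
theorem product_ne_nonpos_real (Δ : ℕ) (hΔ : 3 ≤ Δ) (d : ℕ) (hd : d = Δ - 1)
    (ε : ℝ) (hε : ε = Real.tan (Real.pi / (4 * (d : ℝ))))
    (k : ℕ) (hk1 : 1 ≤ k) (hkΔ : k ≤ Δ) (w : Fin k → ℂ)
    (hw : ∀ j, ‖w j - 1‖ ≤ ε * ‖w j + 1‖) :
    (∀ r : ℝ, r ≤ 0 → (∏ j, w j) ≠ (r : ℂ)) ∧ (∏ j, w j) ≠ -1 :=
  product_ne_nonpos_real_general Δ hΔ d hd ε hε k hkΔ w hw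
end

section
/- Let β ∈ ℂ with β ∉ ℝ and |β − 1| < |β + 1|. Set w = (β + 1)/(β − 1) and, for each integer j ≥ 0, b_j = 1 + 2/(w^{2j+1} − 1). Then: (i) |w| > 1 and w ∉ ℝ, so in particular w^{2j+1} ≠ 1 for all j and each b_j is well defined; (ii) b_0 = β; (iii) for every j such that β + b_j ≠ 0 and β + h_β(b_j) ≠ 0, one has g_β(b_j) = b_{j+1}; (iv) b_j → 1 as j → ∞; (v) b_j ∉ ℝ for infinitely many j. -/
/-- The Möbius map `h_β(z) = (βz + 1)/(β + z)`. -/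
noncomputable def hMap (β z : ℂ) : ℂ := (β * z + 1) / (β + z)

lemma step_aux (β W : ℂ) (h1 : β - 1 ≠ 0) (hW : W - 1 ≠ 0)
    (hd : β + (1 + 2/(W-1)) ≠ 0) :
    hMap β (1 + 2/(W-1)) = 1 + 2/((β+1)/(β-1)*W - 1) := by
  have hnum : β*W + W - β + 1 ≠ 0 := by
    intro h; apply hd
    have : β + (1 + 2/(W-1)) = (β*W + W - β + 1)/(W-1) := by field_simp; ring
    rw [this, h, zero_div]
  have h2 : (β+1)/(β-1)*W - 1 = (β*W + W - β + 1)/(β-1) := by field_simp; ring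
  have hd' : β + (1 + 2/(W-1)) = (β*W + W - β + 1)/(W-1) := by field_simp; ring
  unfold hMap
  rw [h2, hd']
  have hnum' : 1 - β + β * W + W ≠ 0 := by rw [show 1 - β + β * W + W = β*W + W - β + 1 by ring]; exact hnum
  field_simp
  linear_combination mul_inv_cancel₀ hnum'

lemma mem_range_real_iff (z : ℂ) :
    z ∈ Set.range ((↑) : ℝ → ℂ) ↔ z ∈ Complex.ofRealHom.fieldRange := by
  rw [RingHom.mem_fieldRange]
  simp [Set.mem_range, Complex.ofRealHom_eq_coe]

/-- The explicit orbit used in Case 1 of the Ising-program lemma: for non-real `β` with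
`|β − 1| < |β + 1|`, set `w = (β + 1)/(β − 1)` and `b_j = 1 + 2/(w^{2j+1} − 1)`. Then
(i) `|w| > 1`, `w ∉ ℝ` and `w^{2j+1} ≠ 1` for all `j`; (ii) `b_0 = β`;
(iii) `g_β(b_j) = b_{j+1}` whenever the denominators involved are nonzero;
(iv) `b_j → 1`; (v) `b_j ∉ ℝ` for infinitely many `j`. -/
theorem ising_orbit (β : ℂ) (hβR : β ∉ Set.range ((↑) : ℝ → ℂ))
    (hβ : ‖β - 1‖ < ‖β + 1‖)
    (w : ℂ) (hw : w = (β + 1) / (β - 1))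
    (b : ℕ → ℂ) (hbdef : ∀ j : ℕ, b j = 1 + 2 / (w ^ (2 * j + 1) - 1)) :
    (1 < ‖w‖ ∧ w ∉ Set.range ((↑) : ℝ → ℂ) ∧ ∀ j : ℕ, w ^ (2 * j + 1) ≠ 1)
    ∧ b 0 = β
    ∧ (∀ j : ℕ, β + b j ≠ 0 → β + hMap β (b j) ≠ 0 → hMap β (hMap β (b j)) = b (j + 1))
    ∧ Filter.Tendsto b Filter.atTop (nhds 1)
    ∧ {j : ℕ | b j ∉ Set.range ((↑) : ℝ → ℂ)}.Infinite := by
  have hβ1 : β - 1 ≠ 0 := by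
    intro h; exact hβR ⟨1, by rw [sub_eq_zero] at h; simp [h.symm]⟩
  have habspos : 0 < ‖β - 1‖ := by
    simpa [norm_pos_iff] using hβ1
  -- (i)
  have hw1 : 1 < ‖w‖ := by
    rw [hw, norm_div]
    rw [lt_div_iff₀ habspos, one_mul]
    exact hβ
  have hwpow : ∀ n : ℕ, 1 ≤ n → 1 < ‖w ^ n‖ := by
    intro n hn
    rw [norm_pow]
    exact one_lt_pow₀ hw1 (by omega)
  have hwne1 : ∀ j : ℕ, w ^ (2 * j + 1) ≠ 1 := by
    intro j h
    have := hwpow (2 * j + 1) (by omega)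
    rw [h] at this; simp at this
  have hwsub : ∀ j : ℕ, w ^ (2 * j + 1) - 1 ≠ 0 := fun j => sub_ne_zero.mpr (hwne1 j)
  have hwne0 : w ≠ 0 := by
    intro h; rw [h] at hw1; simp only [norm_zero] at hw1; norm_num at hw1
  have hwR : w ∉ Set.range ((↑) : ℝ → ℂ) := by
    rintro ⟨r, hr⟩
    have hwone : w ≠ 1 := by
      intro h
      have h1 : (β + 1) / (β - 1) = 1 := by rw [← hw, h]
      rw [div_eq_one_iff_eq hβ1] at h1
      have : (1:ℂ) = -1 := by linear_combination h1
      norm_num at this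
    have hβeq : β = (w + 1) / (w - 1) := by
      have h2 : w * (β - 1) = β + 1 := by rw [hw, div_mul_cancel₀ _ hβ1]
      have h3 : w - 1 ≠ 0 := sub_ne_zero.mpr hwone
      rw [eq_div_iff h3]
      linear_combination h2
    apply hβR
    refine ⟨(r + 1) / (r - 1), ?_⟩
    rw [hβeq, ← hr]
    push_cast
    ring
  -- (ii)
  have hb0 : b 0 = β := by
    rw [hbdef 0]
    have : w ^ (2 * 0 + 1) = w := by norm_num
    rw [this, hw]
    have hsub : (β + 1) / (β - 1) - 1 = 2 / (β - 1) := by field_simp; ring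
    rw [hsub]
    have h22 : (2:ℂ) / (2 / (β - 1)) = β - 1 := by
      field_simp
    rw [h22]; ring
  -- (iii)
  have hiii : ∀ j : ℕ, β + b j ≠ 0 → β + hMap β (b j) ≠ 0 →
      hMap β (hMap β (b j)) = b (j + 1) := by
    intro j hd1 hd2
    rw [hbdef j] at *
    have s1 : hMap β (1 + 2 / (w ^ (2 * j + 1) - 1))
        = 1 + 2 / (w * w ^ (2 * j + 1) - 1) := by
      rw [step_aux β _ hβ1 (hwsub j) hd1, ← hw]
    have hW2 : w * w ^ (2 * j + 1) - 1 ≠ 0 := by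
      refine sub_ne_zero.mpr ?_
      intro h
      have : w * w ^ (2 * j + 1) = w ^ (2 * j + 2) := by ring
      rw [this] at h
      have := hwpow (2 * j + 2) (by omega)
      rw [h] at this; simp at this
    rw [s1] at hd2 ⊢
    rw [step_aux β _ hβ1 hW2 hd2, ← hw, hbdef (j + 1)]
    congr 2
    ring
  -- (iv)
  have hiv : Filter.Tendsto b Filter.atTop (nhds 1) := by
    have hnorm : Filter.Tendsto (fun j : ℕ => ‖w ^ (2 * j + 1) - 1‖)
        Filter.atTop Filter.atTop := by
      have h1 : Filter.Tendsto (fun j : ℕ => ‖w‖ ^ (2 * j + 1) - 1)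
          Filter.atTop Filter.atTop := by
        apply Filter.tendsto_atTop_add_const_right
        exact (tendsto_pow_atTop_atTop_of_one_lt hw1).comp
          (Filter.tendsto_atTop_atTop.mpr fun n => ⟨n, fun a ha => by omega⟩)
      apply Filter.tendsto_atTop_mono _ h1
      intro j
      calc ‖w‖ ^ (2 * j + 1) - 1
          = ‖w ^ (2 * j + 1)‖ - ‖(1 : ℂ)‖ := by
            rw [norm_pow]; simp
        _ ≤ ‖w ^ (2 * j + 1) - 1‖ := by
            simpa using norm_sub_norm_le (w ^ (2 * j + 1)) (1 : ℂ)
    have h0 : Filter.Tendsto (fun j : ℕ => 2 / (w ^ (2 * j + 1) - 1))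
        Filter.atTop (nhds 0) := by
      rw [tendsto_zero_iff_norm_tendsto_zero]
      have : (fun j : ℕ => ‖(2:ℂ) / (w ^ (2 * j + 1) - 1)‖)
          = fun j : ℕ => 2 * (‖w ^ (2 * j + 1) - 1‖)⁻¹ := by
        funext j
        simp [norm_div, div_eq_mul_inv]
      rw [this]
      simpa using (hnorm.inv_tendsto_atTop).const_mul (2:ℝ)
    have := h0.const_add (1 : ℂ)
    simp only [add_zero] at this
    apply this.congr
    intro j
    exact (hbdef j).symm
  -- (v)
  have hv : {j : ℕ | b j ∉ Set.range ((↑) : ℝ → ℂ)}.Infinite := by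
    by_contra hinf
    rw [Set.not_infinite] at hinf
    have hfin := hinf
    obtain ⟨N, hN⟩ := hfin.bddAbove
    have hreal : ∀ j : ℕ, N < j → b j ∈ Complex.ofRealHom.fieldRange := by
      intro j hj
      by_contra h
      exact absurd (hN ((mem_range_real_iff _).not.mpr h)) (by omega)
    have hU : ∀ j : ℕ, N < j → w ^ (2 * j + 1) ∈ Complex.ofRealHom.fieldRange := by
      intro j hj
      have hb : b j ∈ Complex.ofRealHom.fieldRange := hreal j hj
      have hb1 : b j - 1 ≠ 0 := by
        rw [hbdef j]
        simpa using div_ne_zero (two_ne_zero) (hwsub j)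
      have h2 : w ^ (2 * j + 1) = 2 / (b j - 1) + 1 := by
        rw [hbdef j]
        rw [add_sub_cancel_left, div_div_cancel₀ two_ne_zero, sub_add_cancel]
      rw [h2]
      have h2mem : (2:ℂ) ∈ Complex.ofRealHom.fieldRange := ⟨2, by norm_num⟩
      have h1mem : (1:ℂ) ∈ Complex.ofRealHom.fieldRange := ⟨1, by norm_num⟩
      exact add_mem (div_mem h2mem (sub_mem hb h1mem)) h1mem
    have hU1 := hU (N + 1) (by omega)
    have hU2 := hU (N + 2) (by omega)
    have hU1ne : w ^ (2 * (N + 1) + 1) ≠ 0 := pow_ne_zero _ hwne0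
    have hw2 : w ^ 2 ∈ Complex.ofRealHom.fieldRange := by
      have h : w ^ 2 = w ^ (2 * (N + 2) + 1) / w ^ (2 * (N + 1) + 1) := by
        rw [eq_div_iff hU1ne, ← pow_add]
        congr 1
        omega
      rw [h]
      exact div_mem hU2 hU1
    have hwmem : w ∈ Complex.ofRealHom.fieldRange := by
      have h : w = w ^ (2 * (N + 1) + 1) / (w ^ 2) ^ (N + 1) := by
        rw [eq_div_iff (pow_ne_zero _ (pow_ne_zero _ hwne0)), ← pow_mul, ← pow_succ']
      rw [h]
      exact div_mem hU1 (pow_mem hw2 _)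
    exact hwR ((mem_range_real_iff w).mpr hwmem)
  exact ⟨⟨hw1, hwR, hwne1⟩, hb0, hiii, hiv, hv⟩
end

section
/- Let β ∈ ℂ with β ∉ ℝ and |β| ≠ 1. Then ((β − 1)/(β + 1))² is not a real number. Moreover, for any β ∈ ℂ with β ∉ {1, −1}, the derivative of g_β = h_β ∘ h_β at the point 1 equals ((β − 1)/(β + 1))². -/
/-!
`w = (β - 1)/(β + 1)` is the Cayley transform of `β`: `Re w = (|β|² - 1)/|β + 1|²` and
`Im w = 2 Im β / |β + 1|²`. If `w²` is real then `Re w · Im w = 0`, so `β` is real or lies on the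
unit circle. For the multiplier, `1` is a fixed point of `h_β` with `h_β'(1) = w`, and the chain
rule gives `g_β'(1) = w²`.
-/

open Complex

theorem Complex.mem_range_ofReal_iff {z : ℂ} : z ∈ Set.range ((↑) : ℝ → ℂ) ↔ z.im = 0 :=
  ⟨by rintro ⟨r, rfl⟩; exact ofReal_im r, fun h => ⟨z.re, ext rfl (by simp [h])⟩⟩

section Cayley

variable (β : ℂ)

theorem re_cayley : ((β - 1) / (β + 1)).re = (normSq β - 1) / normSq (β + 1) := by
  rw [div_re, normSq_apply β]
  simp only [sub_re, add_re, sub_im, add_im, one_re, one_im]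
  ring

theorem im_cayley : ((β - 1) / (β + 1)).im = 2 * β.im / normSq (β + 1) := by
  rw [div_im]
  simp only [sub_re, add_re, sub_im, add_im, one_re, one_im]
  ring

theorem im_eq_zero_of_im_cayley_eq_zero (h : ((β - 1) / (β + 1)).im = 0) : β.im = 0 := by
  rw [im_cayley, div_eq_zero_iff] at h
  rcases h with h | h
  · linarith
  · simpa using congrArg im (normSq_eq_zero.mp h)

theorem norm_eq_one_of_re_cayley_eq_zero (h : ((β - 1) / (β + 1)).re = 0) : ‖β‖ = 1 := by
  rw [re_cayley, div_eq_zero_iff] at h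
  rcases h with h | h
  · rw [← pow_eq_one_iff_of_nonneg (norm_nonneg β) two_ne_zero, ← normSq_eq_norm_sq]
    linarith
  · rw [eq_neg_of_add_eq_zero_left (normSq_eq_zero.mp h), norm_neg, norm_one]

theorem im_cayley_sq_ne_zero {β : ℂ} (hβ : β.im ≠ 0) (hnorm : ‖β‖ ≠ 1) :
    (((β - 1) / (β + 1)) ^ 2).im ≠ 0 := by
  have h2 : ∀ w : ℂ, (w ^ 2).im = 2 * w.re * w.im := fun w => by rw [sq, mul_im]; ring
  rw [h2]
  refine mul_ne_zero (mul_ne_zero two_ne_zero ?_) ?_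
  · exact fun h => hnorm (norm_eq_one_of_re_cayley_eq_zero β h)
  · exact fun h => hβ (im_eq_zero_of_im_cayley_eq_zero β h)

end Cayley

theorem hasDerivAt_hMap {β z : ℂ} (hz : β + z ≠ 0) :
    HasDerivAt (hMap β) ((β ^ 2 - 1) / (β + z) ^ 2) z := by
  have hnum : HasDerivAt (fun w => β * w + 1) β z :=
    ((hasDerivAt_id z).const_mul β).add_const 1 |>.congr_deriv (mul_one β)
  have hden : HasDerivAt (fun w => β + w) 1 z := (hasDerivAt_id z).const_add β
  exact (hnum.div hden hz).congr_deriv (by ring)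

theorem hMap_one {β : ℂ} (hβ : β + 1 ≠ 0) : hMap β 1 = 1 := by
  rw [hMap, mul_one, div_self hβ]

theorem hasDerivAt_hMap_one {β : ℂ} (hβ : β + 1 ≠ 0) :
    HasDerivAt (hMap β) ((β - 1) / (β + 1)) 1 := by
  convert hasDerivAt_hMap hβ using 1
  field_simp
  ring

/-- For non-real `β` with `|β| ≠ 1`, `((β − 1)/(β + 1))²` is not real; moreover, for any
`β ∉ {1, −1}`, the derivative of `g_β = h_β ∘ h_β` at `1` equals `((β − 1)/(β + 1))²`. -/
theorem multiplier_properties :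
    (∀ β : ℂ, β ∉ Set.range ((↑) : ℝ → ℂ) → ‖β‖ ≠ 1 →
      ((β - 1) / (β + 1)) ^ 2 ∉ Set.range ((↑) : ℝ → ℂ))
    ∧ (∀ β : ℂ, β ≠ 1 → β ≠ -1 →
      deriv (fun z => hMap β (hMap β z)) 1 = ((β - 1) / (β + 1)) ^ 2) := by
  refine ⟨fun β hβ hnorm => ?_, fun β _ hβ => ?_⟩
  · rw [mem_range_ofReal_iff] at hβ ⊢
    exact im_cayley_sq_ne_zero hβ hnorm
  · have hβ1 : β + 1 ≠ 0 := fun h => hβ (eq_neg_of_add_eq_zero_left h)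
    have hfix := hasDerivAt_hMap_one hβ1
    have hfix' : HasDerivAt (hMap β) ((β - 1) / (β + 1)) (hMap β 1) := by
      rwa [hMap_one hβ1]
    have hcomp := hfix'.comp 1 hfix
    rw [Function.comp_def] at hcomp
    rw [hcomp.deriv, sq]
end

section
/- Let c ∈ ℝ with c ∉ {0, 1, −1}, let β = c·i, and let γ = h_β(h_β(β²)). Then both denominators occurring in this expression are nonzero (i.e. β + β² ≠ 0 and β + h_β(β²) ≠ 0), so γ ∈ ℂ is well defined; moreover γ ∉ ℝ, γ ∉ {i, −i}, and |γ − 1| = ((1 + c²)/|1 − c²|)·|γ + 1| > |γ + 1|. -/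
/-- Case 3 of the Ising-program lemma: for `β = c·i` with real `c ∉ {0, 1, −1}`, the
element `γ = h_β(h_β(β²))` is well defined (the relevant denominators are nonzero),
is not real, is not `±i`, and satisfies
`|γ − 1| = ((1 + c²)/|1 − c²|)·|γ + 1| > |γ + 1|`. -/
theorem imaginary_beta_step (c : ℝ) (hc0 : c ≠ 0) (hc1 : c ≠ 1) (hcm1 : c ≠ -1)
    (β γ : ℂ) (hβ : β = (c : ℂ) * Complex.I) (hγ : γ = hMap β (hMap β (β ^ 2))) :
    β + β ^ 2 ≠ 0 ∧ β + hMap β (β ^ 2) ≠ 0 ∧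
    γ ∉ Set.range ((↑) : ℝ → ℂ) ∧ γ ≠ Complex.I ∧ γ ≠ -Complex.I ∧
    ‖γ - 1‖ = ((1 + c ^ 2) / |1 - c ^ 2|) * ‖γ + 1‖ ∧
    ‖γ + 1‖ < ‖γ - 1‖ := by
  subst hβ
  have hc0' : (c : ℂ) ≠ 0 := Complex.ofReal_ne_zero.mpr hc0
  have h1c : 1 - c ^ 2 ≠ 0 := by
    intro h
    have h2 : (c - 1) * (c + 1) = 0 := by nlinarith
    rcases mul_eq_zero.mp h2 with h3 | h3
    · exact hc1 (by linarith)
    · exact hcm1 (by linarith)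
  have hDpos : (0:ℝ) < 4 * c ^ 4 - 3 * c ^ 2 + 1 := by
    nlinarith [sq_nonneg (2 * c ^ 2 - 1), sq_nonneg c]
  have hD : (4 * c ^ 4 - 3 * c ^ 2 + 1 : ℝ) ≠ 0 := ne_of_gt hDpos
  have hd1 : (c:ℂ)*Complex.I + ((c:ℂ)*Complex.I)^2 ≠ 0 := by
    intro h
    have := congrArg Complex.im h
    simp [Complex.ext_iff, pow_two] at this
    exact hc0 this
  have hw : hMap ((c:ℂ)*Complex.I) (((c:ℂ)*Complex.I)^2)
      = -1 + (((c^2-1)/c : ℝ) : ℂ) * Complex.I := by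
    unfold hMap
    rw [div_eq_iff hd1]
    push_cast
    field_simp
    linear_combination (1 + (c:ℂ)*Complex.I) * Complex.I_sq
  have hd2 : (c:ℂ)*Complex.I + hMap ((c:ℂ)*Complex.I) (((c:ℂ)*Complex.I)^2) ≠ 0 := by
    rw [hw]
    intro h
    have := congrArg Complex.re h
    simp [pow_two] at this
  set a : ℝ := (-(c ^ 2 * (1 + c ^ 2))) / (4 * c ^ 4 - 3 * c ^ 2 + 1) with ha
  set b : ℝ := (2 * c * (c ^ 2 - 1) ^ 2) / (4 * c ^ 4 - 3 * c ^ 2 + 1) with hb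
  have hγ' : γ = (a : ℂ) + (b : ℂ) * Complex.I := by
    rw [hγ, hw]
    unfold hMap
    rw [div_eq_iff (by rw [hw] at hd2; exact hd2)]
    rw [ha, hb]
    push_cast
    have hD' : (4*(c:ℂ)^4 - 3*(c:ℂ)^2 + 1) ≠ 0 := by
      have := Complex.ofReal_ne_zero.mpr hD
      push_cast at this
      convert this using 2 <;> ring
    field_simp
    rw [eq_div_iff (by convert hD' using 1; ring)]
    linear_combination (((c:ℂ)^2-1)*(4*(c:ℂ)^4-3*(c:ℂ)^2+1) - 2*((c:ℂ)^2-1)^2*(2*(c:ℂ)^2-1)) * Complex.I_sq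
  have hbne : b ≠ 0 := by
    rw [hb]
    apply div_ne_zero _ hD
    have : c ^ 2 - 1 ≠ 0 := fun h => h1c (by linarith)
    positivity
  have hane : a ≠ 0 := by
    rw [ha]
    apply div_ne_zero _ hD
    have : (0:ℝ) < c ^ 2 * (1 + c ^ 2) := by positivity
    intro h; nlinarith
  have hγim : γ.im = b := by rw [hγ']; simp
  have hγre : γ.re = a := by rw [hγ']; simp
  have hk1 : 1 < (1 + c ^ 2) / |1 - c ^ 2| := by
    have hc2 : 0 < c ^ 2 := by positivity
    rw [lt_div_iff₀ (abs_pos.mpr h1c), one_mul]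
    rcases abs_cases (1 - c ^ 2) with ⟨h, _⟩ | ⟨h, _⟩ <;> rw [h] <;> nlinarith [hc2]
  have hBpos : 0 < ‖γ + 1‖ := by
    apply norm_pos_iff.mpr
    intro h
    apply hbne
    rw [← hγim]
    have := congrArg Complex.im h
    simpa using this
  have habs : ‖γ - 1‖ = ((1 + c ^ 2) / |1 - c ^ 2|) * ‖γ + 1‖ := by
    have hk0 : (0:ℝ) < |1 - c ^ 2| := abs_pos.mpr h1c
    rw [← sq_eq_sq₀ (norm_nonneg _) (by positivity)]
    have e1 : γ - 1 = ((a - 1 : ℝ) : ℂ) + (b:ℝ) * Complex.I := by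
      rw [hγ']; push_cast; ring
    have e2 : γ + 1 = ((a + 1 : ℝ) : ℂ) + (b:ℝ) * Complex.I := by
      rw [hγ']; push_cast; ring
    rw [mul_pow, div_pow, sq_abs, e1, e2, Complex.sq_norm, Complex.sq_norm,
      Complex.normSq_add_mul_I, Complex.normSq_add_mul_I, ha, hb]
    have hD2 : (c ^ 2 * (c ^ 2 * 4 - 3) + 1 : ℝ) ≠ 0 := by convert hD using 1; ring
    field_simp
    ring
  refine ⟨hd1, hd2, ?_, ?_, ?_, habs, ?_⟩
  · rintro ⟨x, hx⟩
    apply hbne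
    rw [← hγim, ← hx]
    simp
  · intro h
    apply hane
    rw [← hγre, h]
    simp
  · intro h
    apply hane
    rw [← hγre, h]
    simp
  · calc ‖γ + 1‖ = 1 * ‖γ + 1‖ := (one_mul _).symm
      _ < ((1 + c ^ 2) / |1 - c ^ 2|) * ‖γ + 1‖ := by
          exact mul_lt_mul_of_pos_right hk1 hBpos
      _ = ‖γ - 1‖ := habs.symm
end

section
/- There exists β ∈ ℂ with β ∉ ℝ such that 1 + 6β² + 8β³ + 2β⁴ + 8β⁵ + 6β⁶ + β⁸ = 0, |β − 1| < (1/√2)·|β + 1|, and 1 + β² + 2β³ ≠ 0. -/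
/-!
The octic is palindromic: for `z ≠ 0` it equals `z⁴ (w + 2)(w³ − 2w² + 6w − 4)` with
`w = z + z⁻¹`. On the unit circle `w = 2 Re z`, `‖z − 1‖² = 2 − w` and `‖z + 1‖² = 2 + w`, so the
disk condition becomes `w > 2/3`; the cubic factor has a root `w ∈ (2/3, 1)`, and
`z = exp (i arccos (w / 2))` is the required zero. On the unit circle `z² = w z − 1`, which turns
`1 + z² + 2z³` into `a z + b` with real `a, b`; this cannot vanish at a non-real `z` unless
`a = b = 0`, which is impossible.
-/

open Complex

theorem exists_root_mem_Ioo_cubic :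
    ∃ y ∈ Set.Ioo (2 / 3 : ℝ) 1, y ^ 3 - 2 * y ^ 2 + 6 * y - 4 = 0 :=
  intermediate_value_Ioo (by norm_num) (by fun_prop) (by norm_num)

theorem octic_eq_pow_four_mul_of_add_inv_eq {K : Type*} [Field K] {z w : K} (hz : z ≠ 0)
    (hw : z + z⁻¹ = w) :
    1 + 6 * z ^ 2 + 8 * z ^ 3 + 2 * z ^ 4 + 8 * z ^ 5 + 6 * z ^ 6 + z ^ 8
      = z ^ 4 * ((w + 2) * (w ^ 3 - 2 * w ^ 2 + 6 * w - 4)) := by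
  subst hw
  field_simp
  ring

namespace Complex

theorem exists_norm_eq_one_re_eq_im_pos {x : ℝ} (hx : x ∈ Set.Ioo (-1) 1) :
    ∃ β : ℂ, ‖β‖ = 1 ∧ β.re = x ∧ 0 < β.im :=
  ⟨exp (Real.arccos x * I), norm_exp_ofReal_mul_I _,
    by rw [exp_ofReal_mul_I_re, Real.cos_arccos hx.1.le hx.2.le],
    by rw [exp_ofReal_mul_I_im, Real.sin_arccos]; exact Real.sqrt_pos.2 (by nlinarith [hx.1, hx.2])⟩

variable {β : ℂ}

theorem add_inv_eq_two_mul_re (hβ : ‖β‖ = 1) : β + β⁻¹ = ↑(2 * β.re) := by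
  rw [inv_eq_conj hβ, add_conj]

theorem sq_eq_two_mul_re_mul_sub_one (hβ : ‖β‖ = 1) : β ^ 2 = 2 * β.re * β - 1 := by
  have hβ0 : β ≠ 0 := norm_ne_zero_iff.1 (by simp [hβ])
  have h := add_inv_eq_two_mul_re hβ
  push_cast at h
  field_simp at h
  linear_combination h

theorem sq_norm_add_one (hβ : ‖β‖ = 1) : ‖β + 1‖ ^ 2 = 2 + 2 * β.re := by
  rw [Complex.sq_norm, normSq_add, ← Complex.sq_norm, hβ]
  simp only [one_pow, map_one, mul_one]
  ring

theorem sq_norm_sub_one (hβ : ‖β‖ = 1) : ‖β - 1‖ ^ 2 = 2 - 2 * β.re := by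
  rw [Complex.sq_norm, normSq_sub, ← Complex.sq_norm, hβ]
  simp only [one_pow, map_one, mul_one]
  ring

theorem norm_sub_one_lt_of_one_third_lt_re (hβ : ‖β‖ = 1) (hre : 1 / 3 < β.re) :
    ‖β - 1‖ < 1 / Real.sqrt 2 * ‖β + 1‖ := by
  refine lt_of_pow_lt_pow_left₀ 2 (by positivity) ?_
  rw [mul_pow, sq_norm_sub_one hβ, sq_norm_add_one hβ, div_pow, Real.sq_sqrt zero_le_two]
  linarith

theorem one_add_sq_add_two_mul_cube_ne_zero (hβ : ‖β‖ = 1) (him : β.im ≠ 0) :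
    1 + β ^ 2 + 2 * β ^ 3 ≠ 0 := by
  set x := β.re
  have hsq := sq_eq_two_mul_re_mul_sub_one hβ
  have hlin :
      1 + β ^ 2 + 2 * β ^ 3 = ((8 * x ^ 2 + 2 * x - 2 : ℝ) : ℂ) * β - ((4 * x : ℝ) : ℂ) := by
    push_cast
    linear_combination (1 + 2 * β + 4 * (x : ℂ)) * hsq
  intro h0
  rw [hlin] at h0
  have hre := congrArg re h0
  have him0 := congrArg im h0
  simp only [sub_re, sub_im, re_ofReal_mul, im_ofReal_mul, ofReal_re, ofReal_im, zero_re,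
    zero_im] at hre him0
  have hcoef : 8 * x ^ 2 + 2 * x - 2 = 0 := by
    simpa only [sub_zero, mul_eq_zero, him, or_false] using him0
  rw [hcoef] at hre
  have hx : x = 0 := by linarith
  norm_num [hx] at hcoef

end Complex

/-- There is a non-real zero `β` of `1 + 6β² + 8β³ + 2β⁴ + 8β⁵ + 6β⁶ + β⁸` lying strictly
inside the region `|β − 1| < (1/√2)·|β + 1|`, at which `1 + β² + 2β³ ≠ 0`. -/
theorem exists_nonreal_zero_inside :
    ∃ β : ℂ, β ∉ Set.range ((↑) : ℝ → ℂ)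
      ∧ 1 + 6 * β ^ 2 + 8 * β ^ 3 + 2 * β ^ 4 + 8 * β ^ 5 + 6 * β ^ 6 + β ^ 8 = 0
      ∧ ‖β - 1‖ < (1 / Real.sqrt 2) * ‖β + 1‖
      ∧ 1 + β ^ 2 + 2 * β ^ 3 ≠ 0 := by
  obtain ⟨y, ⟨hy₁, hy₂⟩, hroot⟩ := exists_root_mem_Ioo_cubic
  obtain ⟨β, hnorm, hre, him⟩ :=
    exists_norm_eq_one_re_eq_im_pos (x := y / 2) ⟨by linarith, by linarith⟩
  have hβy : β + β⁻¹ = y := by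
    rw [add_inv_eq_two_mul_re hnorm, hre]
    congr 1
    ring
  have hrootℂ : (y : ℂ) ^ 3 - 2 * y ^ 2 + 6 * y - 4 = 0 := by exact_mod_cast hroot
  refine ⟨β, ?_, ?_, norm_sub_one_lt_of_one_third_lt_re hnorm (by linarith),
    one_add_sq_add_two_mul_cube_ne_zero hnorm him.ne'⟩
  · rintro ⟨r, rfl⟩
    simp at him
  · rw [octic_eq_pow_four_mul_of_add_inv_eq (norm_ne_zero_iff.1 (by simp [hnorm])) hβy, hrootℂ,
      mul_zero, mul_zero]
end

section
/- Let d ≥ 2 be an integer and let g(x) = (px + q)/(rx + s) with p, q, r, s ∈ ℂ and ps − qr ≠ 0. Let ω ∈ ℂ with ω ≠ 0, r·ω^d + s ≠ 0 and g(ω^d) = ω, and set z = g'(ω^d)·ω^{d−1} (note z ≠ 0). Then there exist real numbers C₁ > 1 and δ₁ > 0 such that for all a_1, …, a_d ∈ ℂ with |a_j| ≤ δ₁ for every j ∈ {1,…,d}: each ω + a_j is nonzero, g^{−1}(ω + a_d) is a well-defined complex number, and, writing Φ^{−1}(y) = g^{−1}(y) · ∏_{j=1}^{d−1} (ω + a_j)^{−1},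 one has |Φ^{−1}(ω + a_d) − ω − a_d/z + ∑_{j=1}^{d−1} a_j| ≤ C₁ · (max_{j ∈ [d]} |a_j|)². -/
open scoped NNReal

private lemma prod_est' {ι : Type*} (F : Finset ι) (x : ι → ℂ) (m : ℝ) (hm0 : 0 ≤ m) (hm1 : m ≤ 1)
    (hx : ∀ j ∈ F, ‖x j‖ ≤ m) :
    ‖∏ j ∈ F, (1 + x j) - 1 - ∑ j ∈ F, x j‖ ≤ 2 ^ F.card * F.card * m ^ 2 := by
  classical
  induction F using Finset.induction_on with
  | empty => simp
  | @insert k F hk ih =>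
    have hxk : ‖x k‖ ≤ m := hx k (Finset.mem_insert_self _ _)
    have ih' := ih (fun j hj => hx j (Finset.mem_insert_of_mem hj))
    set S := ∑ j ∈ F, x j with hS
    set P := ∏ j ∈ F, (1 + x j) with hP
    have key : ∏ j ∈ insert k F, (1 + x j) - 1 - ∑ j ∈ insert k F, x j
        = (P - 1 - S) * (1 + x k) + x k * S := by
      rw [Finset.prod_insert hk, Finset.sum_insert hk]; ring
    have hSb : ‖S‖ ≤ F.card * m := by
      calc ‖S‖ ≤ ∑ j ∈ F, ‖x j‖ := norm_sum_le _ _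
      _ ≤ ∑ _j ∈ F, m := Finset.sum_le_sum (fun j hj => hx j (Finset.mem_insert_of_mem hj))
      _ = F.card * m := by simp [mul_comm]
    rw [key, Finset.card_insert_of_notMem hk]
    have h1 : ‖(P - 1 - S) * (1 + x k) + x k * S‖ ≤ ‖P - 1 - S‖ * (1 + ‖x k‖) + ‖x k‖ * ‖S‖ := by
      calc _ ≤ ‖(P - 1 - S) * (1 + x k)‖ + ‖x k * S‖ := norm_add_le _ _
      _ = ‖P - 1 - S‖ * ‖1 + x k‖ + ‖x k‖ * ‖S‖ := by rw [norm_mul, norm_mul]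
      _ ≤ _ := by
          gcongr
          calc ‖(1:ℂ) + x k‖ ≤ ‖(1:ℂ)‖ + ‖x k‖ := norm_add_le _ _
          _ = 1 + ‖x k‖ := by simp
    have h2 : (1:ℝ) ≤ 2 ^ F.card := one_le_pow₀ (by norm_num)
    have hnn : (0:ℝ) ≤ ‖P - 1 - S‖ := norm_nonneg _
    have hxk0 : (0:ℝ) ≤ ‖x k‖ := norm_nonneg _
    have hSnn : (0:ℝ) ≤ ‖S‖ := norm_nonneg _
    have hcard : (0:ℝ) ≤ (F.card : ℝ) := Nat.cast_nonneg _
    calc ‖(P - 1 - S) * (1 + x k) + x k * S‖ ≤ ‖P - 1 - S‖ * (1 + ‖x k‖) + ‖x k‖ * ‖S‖ := h1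
    _ ≤ (2 ^ F.card * F.card * m ^ 2) * 2 + m * (F.card * m) := by
        gcongr <;> linarith
    _ ≤ 2 ^ (F.card + 1) * (F.card + 1) * m ^ 2 := by
        have h3 : (F.card:ℝ) ≤ 2 ^ F.card := by exact_mod_cast (@Nat.lt_two_pow_self F.card).le
        have hm2 : (0:ℝ) ≤ m ^ 2 := sq_nonneg m
        have h4 : (2:ℝ) ^ (F.card + 1) = 2 * 2 ^ F.card := by ring
        rw [h4]
        nlinarith [mul_nonneg hm2 (sub_nonneg.mpr h3)]
    _ = 2 ^ (F.card + 1) * ((F.card + 1 : ℕ) : ℝ) * m ^ 2 := by push_cast; ring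



private lemma aux1 {x n : ℝ} (hx : 0 < x) (hn : 1 ≤ n) : n * (x / (4 * (n + 1))) ≤ 1 / 4 * x := by
  rw [mul_div_assoc', div_le_iff₀ (by positivity)]
  nlinarith

private lemma aux2 {t x δ : ℝ} (ht : 0 < t) (hx : 0 < x) (hδ0 : 0 ≤ δ)
    (h : δ ≤ x ^ 2 / (4 * (t + 1))) : t / x ^ 2 * δ ≤ 1 / 4 := by
  have h1 : t / x ^ 2 * δ ≤ t / x ^ 2 * (x ^ 2 / (4 * (t + 1))) :=
    mul_le_mul_of_nonneg_left h (by positivity)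
  have h2 : t / x ^ 2 * (x ^ 2 / (4 * (t + 1))) = t / (4 * (t + 1)) := by
    field_simp
  have h3 : t / (4 * (t + 1)) ≤ 1 / 4 := by
    rw [div_le_div_iff₀ (by positivity) (by norm_num)]
    nlinarith
  linarith

private lemma aux3 {R B : ℝ} (hR : 0 ≤ R) (hB : 0 < B) : R * (B / (2 * (R + 1))) ≤ B / 2 := by
  rw [mul_div_assoc', div_le_div_iff₀ (by positivity) (by norm_num)]
  nlinarith


set_option maxHeartbeats 1600000

/-- Local linearization of the inverse map `Φ⁻¹(y) = g⁻¹(y)·∏_{j<d}(ω + a_j)⁻¹` around a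
fixed point `ω ≠ 0` of `f(x) = g(x^d)`, for a Möbius map `g(x) = (px + q)/(rx + s)` with
inverse `g⁻¹(y) = (sy − q)/(−ry + p)`: writing `z = g'(ω^d)·ω^{d−1}` (which is nonzero),
there are `C₁ > 1` and `δ₁ > 0` such that for all `a₁, …, a_{d−1}, a_d` of modulus at
most `δ₁`, each `ω + a_j` is nonzero, `g⁻¹(ω + a_d)` is a well-defined complex number,
and `|Φ⁻¹(ω + a_d) − ω − a_d/z + ∑_{j<d} a_j| ≤ C₁·(max_j |a_j|)²`. -/
theorem mobius_inverse_linearization (d : ℕ) (hd : 2 ≤ d)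
    (p q r s : ℂ) (hdet : p * s - q * r ≠ 0)
    (g : ℂ → ℂ) (hgdef : g = fun x => (p * x + q) / (r * x + s))
    (ω : ℂ) (hω0 : ω ≠ 0) (hpole : r * ω ^ d + s ≠ 0) (hfix : g (ω ^ d) = ω)
    (z : ℂ) (hz : z = deriv g (ω ^ d) * ω ^ (d - 1)) :
    z ≠ 0 ∧
    ∃ C₁ : ℝ, 1 < C₁ ∧ ∃ δ₁ : ℝ, 0 < δ₁ ∧
      ∀ (a : Fin (d - 1) → ℂ) (ad : ℂ),
        (∀ j, ‖a j‖ ≤ δ₁) → ‖ad‖ ≤ δ₁ →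
        (∀ j, ω + a j ≠ 0) ∧ ω + ad ≠ 0 ∧ -r * (ω + ad) + p ≠ 0 ∧
        ‖((s * (ω + ad) - q) / (-r * (ω + ad) + p) * (∏ j, (ω + a j))⁻¹
            - ω - ad / z + ∑ j, a j)‖
          ≤ C₁ * max ((Finset.univ.sup fun j => ‖a j‖₊ : ℝ≥0) : ℝ) ‖ad‖ ^ 2 := by
  set D : ℂ := p * s - q * r with hD
  set B : ℂ := -r * ω + p with hBdef
  have hfix' : p * ω ^ d + q = ω * (r * ω ^ d + s) := by
    rw [hgdef] at hfix; simp only at hfix; rw [div_eq_iff hpole] at hfix; linear_combination hfix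
  have hB : B * (r * ω ^ d + s) = D := by rw [hBdef, hD]; linear_combination r * hfix'
  have hB0 : B ≠ 0 := by
    intro h; rw [h, zero_mul] at hB; exact hdet hB.symm
  have hA : s * ω - q = B * ω ^ d := by rw [hBdef]; linear_combination (-1 : ℂ) * hfix'
  clear_value D B
  have hg' : HasDerivAt g ((p * (r * ω ^ d + s) - (p * ω ^ d + q) * r) / (r * ω ^ d + s) ^ 2)
      (ω ^ d) := by
    rw [hgdef]
    have h1 : HasDerivAt (fun x : ℂ => p * x + q) p (ω ^ d) := by
      simpa using ((hasDerivAt_id (ω ^ d)).const_mul p).add_const q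
    have h2 : HasDerivAt (fun x : ℂ => r * x + s) r (ω ^ d) := by
      simpa using ((hasDerivAt_id (ω ^ d)).const_mul r).add_const s
    exact h1.div h2 hpole
  have hderiv : deriv g (ω ^ d) = D / (r * ω ^ d + s) ^ 2 := by
    rw [hg'.deriv, hD]; congr 1; ring
  have hzD : z * D = ω ^ (d - 1) * B ^ 2 := by
    rw [hz, hderiv]
    rw [div_mul_eq_mul_div, div_mul_eq_mul_div, div_eq_iff (pow_ne_zero 2 hpole)]
    linear_combination (-(ω ^ (d - 1)) * (B * (r * ω ^ d + s) + D)) * hB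
  have hz0 : z ≠ 0 := by
    intro h
    rw [h, zero_mul] at hzD
    exact (mul_ne_zero (pow_ne_zero _ hω0) (pow_ne_zero _ hB0)) hzD.symm
  refine ⟨hz0, ?_⟩
  -- constants
  have hnn1 : 1 ≤ d - 1 := by omega
  set nR : ℝ := ((d - 1 : ℕ) : ℝ) with hnR
  have hnR1 : 1 ≤ nR := by rw [hnR]; exact_mod_cast hnn1
  set aω : ℝ := ‖ω‖ with haω
  have haω0 : 0 < aω := norm_pos_iff.mpr hω0
  set aB : ℝ := ‖B‖ with haB
  have haB0 : 0 < aB := norm_pos_iff.mpr hB0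
  set aZ : ℝ := ‖z‖ with haZ
  have haZ0 : 0 < aZ := norm_pos_iff.mpr hz0
  set K : ℝ := 2 ^ (d - 1) * nR / aω ^ 2 with hK
  have hK0 : 0 < K := by rw [hK]; positivity
  set c₁ : ℝ := 2 * ‖r * D‖ / (aB ^ 3 * aω ^ (d - 1)) with hc₁
  set c₂ : ℝ := aω * K with hc₂
  set c₃ : ℝ := nR / (aZ * aω) with hc₃
  set c₄ : ℝ := K / aZ with hc₄
  set c₅ : ℝ := nR ^ 2 / aω with hc₅
  set c₆ : ℝ := nR * K with hc₆
  have hc₁0 : 0 ≤ c₁ := by rw [hc₁]; positivity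
  have hc₂0 : 0 ≤ c₂ := by rw [hc₂]; positivity
  have hc₃0 : 0 ≤ c₃ := by rw [hc₃]; positivity
  have hc₄0 : 0 ≤ c₄ := by rw [hc₄]; positivity
  have hc₅0 : 0 ≤ c₅ := by rw [hc₅]; positivity
  have hc₆0 : 0 ≤ c₆ := by rw [hc₆]; positivity
  set C₁ : ℝ := 2 * (c₁ + c₂ + c₃ + c₄ + c₅ + c₆) + 2 with hC₁
  have hC₁1 : 1 < C₁ := by rw [hC₁]; linarith
  set δ₁ : ℝ := min (min 1 (aω / (4 * (nR + 1))))
      (min (aB / (2 * (‖r‖ + 1))) (aω ^ 2 / (4 * (2 ^ (d - 1) * nR + 1)))) with hδ₁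
  have hδ₁0 : 0 < δ₁ := by
    rw [hδ₁]
    have h1 : (0:ℝ) < aω / (4 * (nR + 1)) := by positivity
    have h2 : (0:ℝ) < aB / (2 * (‖r‖ + 1)) := by positivity
    have h3 : (0:ℝ) < aω ^ 2 / (4 * (2 ^ (d - 1) * nR + 1)) := by positivity
    exact lt_min (lt_min one_pos h1) (lt_min h2 h3)
  have hδa : δ₁ ≤ 1 := le_trans (min_le_left _ _) (min_le_left _ _)
  have hδb : δ₁ ≤ aω / (4 * (nR + 1)) := le_trans (min_le_left _ _) (min_le_right _ _)
  have hδc : δ₁ ≤ aB / (2 * (‖r‖ + 1)) := le_trans (min_le_right _ _) (min_le_left _ _)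
  have hδd : δ₁ ≤ aω ^ 2 / (4 * (2 ^ (d - 1) * nR + 1)) :=
    le_trans (min_le_right _ _) (min_le_right _ _)
  clear_value nR aω aB aZ K c₁ c₂ c₃ c₄ c₅ c₆ C₁ δ₁
  refine ⟨C₁, hC₁1, δ₁, hδ₁0, fun a ad ha had => ?_⟩
  -- the max quantity
  set M : ℝ := ((Finset.univ.sup fun j => ‖a j‖₊ : ℝ≥0) : ℝ) with hM
  set m : ℝ := max M (‖ad‖) with hm
  have hja : ∀ j, ‖a j‖ ≤ m := by
    intro j
    calc ‖a j‖ = ((‖a j‖₊ : ℝ≥0) : ℝ) := by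
          rw [coe_nnnorm]
    _ ≤ M := by
          rw [hM]
          exact_mod_cast Finset.le_sup (f := fun j => ‖a j‖₊) (Finset.mem_univ j)
    _ ≤ m := le_max_left _ _
  have hmad : ‖ad‖ ≤ m := le_max_right _ _
  have hm0 : 0 ≤ m := (norm_nonneg ad).trans hmad
  have hmδ : m ≤ δ₁ := by
    rw [hm]
    refine max_le ?_ had
    obtain ⟨j₀, -, hj₀⟩ := Finset.exists_mem_eq_sup Finset.univ
      ⟨(⟨0, by omega⟩ : Fin (d-1)), Finset.mem_univ _⟩ (fun j => ‖a j‖₊)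
    rw [hM, hj₀, coe_nnnorm]
    exact ha j₀
  clear_value M m
  have hm1 : m ≤ 1 := hmδ.trans hδa
  have hdivle : aω / (4 * (nR + 1)) ≤ aω := div_le_self haω0.le (by linarith)
  have hmω : m ≤ aω := le_trans (hmδ.trans hδb) hdivle
  -- nonvanishing of ω + w for small w
  have hne : ∀ w : ℂ, ‖w‖ ≤ δ₁ → ω + w ≠ 0 := by
    intro w hw h
    have hwω : ‖w‖ = aω := by
      rw [show w = -ω by linear_combination h]
      simp [haω]
    have hδlt : δ₁ < aω := lt_of_le_of_lt hδb (div_lt_self haω0 (by linarith))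
    rw [hwω] at hw; linarith
  -- denominator B - r * ad
  have hBr1 : ‖r * ad‖ ≤ aB / 2 := by
    rw [norm_mul]
    have h1 : ‖r‖ * ‖ad‖ ≤ ‖r‖ * δ₁ :=
      mul_le_mul_of_nonneg_left had (norm_nonneg r)
    have h2 : ‖r‖ * δ₁ ≤ ‖r‖ * (aB / (2 * (‖r‖ + 1))) :=
      mul_le_mul_of_nonneg_left hδc (norm_nonneg r)
    have h3 : ‖r‖ * (aB / (2 * (‖r‖ + 1))) ≤ aB / 2 :=
      aux3 (norm_nonneg r) haB0
    linarith
  have hBr2 : aB / 2 ≤ ‖B - r * ad‖ := by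
    have htri : aB ≤ ‖B - r * ad‖ + ‖r * ad‖ := by
      calc aB = ‖B - r * ad + r * ad‖ := by rw [sub_add_cancel, haB]
      _ ≤ _ := norm_add_le _ _
    linarith
  have hBr0 : B - r * ad ≠ 0 := by
    intro h
    rw [h, norm_zero] at hBr2; linarith
  have hBrw : -r * (ω + ad) + p = B - r * ad := by rw [hBdef]; ring
  refine ⟨fun j => hne _ (ha j), hne _ had, by rw [hBrw]; exact hBr0, ?_⟩
  -- sum and product
  set S : ℂ := ∑ j, a j with hSdef
  have hS : ‖S‖ ≤ nR * m := by
    calc ‖S‖ ≤ ∑ j, ‖a j‖ := norm_sum_le _ _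
    _ ≤ ∑ _j : Fin (d-1), m := Finset.sum_le_sum (fun j _ => hja j)
    _ = nR * m := by
        rw [Finset.sum_const, Finset.card_univ, Fintype.card_fin, nsmul_eq_mul, hnR]
  set Q : ℂ := ∏ j, (1 + a j / ω) with hQdef
  have hPQ : (∏ j, (ω + a j)) = ω ^ (d - 1) * Q := by
    rw [hQdef]
    rw [Finset.prod_congr rfl (fun j _ => show ω + a j = ω * (1 + a j / ω) by field_simp)]
    rw [Finset.prod_mul_distrib, Finset.prod_const, Finset.card_univ, Fintype.card_fin]
  set E₂ : ℂ := Q - 1 - S / ω with hE₂def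
  have hE₂ : ‖E₂‖ ≤ K * m ^ 2 := by
    have hsum : ∑ j, a j / ω = S / ω := by rw [hSdef, Finset.sum_div]
    have hbd := prod_est' Finset.univ (fun j => a j / ω) (m / aω) (by positivity)
      (by rw [div_le_one haω0]; exact hmω)
      (fun j _ => by
        rw [norm_div, ← haω]
        gcongr
        exact hja j)
    rw [hsum, Finset.card_univ, Fintype.card_fin] at hbd
    have heq : (2:ℝ) ^ (d-1) * ((d-1:ℕ):ℝ) * (m / aω) ^ 2 = K * m ^ 2 := by
      rw [hK, hnR, div_pow]; field_simp
    calc ‖E₂‖ = ‖(∏ j, (1 + a j / ω)) - 1 - S / ω‖ := by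
          rw [hE₂def, hQdef]
    _ ≤ 2 ^ (d-1) * ((d-1:ℕ):ℝ) * (m / aω) ^ 2 := hbd
    _ = K * m ^ 2 := heq
  clear_value S Q E₂
  have hQ1 : ‖Q - 1‖ ≤ 1 / 2 := by
    have hQ1e : Q - 1 = S / ω + E₂ := by rw [hE₂def]; ring
    have h1 : ‖S / ω‖ ≤ 1 / 4 := by
      rw [norm_div, ← haω, div_le_iff₀ haω0]
      have k1 : nR * m ≤ nR * (aω / (4 * (nR + 1))) :=
        mul_le_mul_of_nonneg_left (hmδ.trans hδb) (by linarith)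
      have k2 : nR * (aω / (4 * (nR + 1))) ≤ 1 / 4 * aω := aux1 haω0 hnR1
      linarith
    have h2 : ‖E₂‖ ≤ 1 / 4 := by
      have e1 : K * m ^ 2 ≤ K * (δ₁ * m) := by
        have : m ^ 2 ≤ δ₁ * m := by nlinarith
        exact mul_le_mul_of_nonneg_left this hK0.le
      have e2 : K * (δ₁ * m) ≤ K * δ₁ := by
        have : δ₁ * m ≤ δ₁ := by nlinarith
        exact mul_le_mul_of_nonneg_left this hK0.le
      have e3 : K * δ₁ ≤ 1 / 4 := by
        rw [hK]
        exact aux2 (by positivity) haω0 hδ₁0.le hδd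
      linarith
    calc ‖Q - 1‖ ≤ ‖S / ω‖ + ‖E₂‖ := by
          rw [hQ1e]; exact norm_add_le _ _
    _ ≤ 1 / 2 := by linarith
  have hQhalf : 1 / 2 ≤ ‖Q‖ := by
    have : (1:ℝ) ≤ ‖Q‖ + ‖Q - 1‖ := by
      calc (1:ℝ) = ‖Q - (Q - 1)‖ := by norm_num
      _ ≤ _ := norm_sub_le _ _
    linarith
  have hQ0 : Q ≠ 0 := by
    intro h; rw [h, norm_zero] at hQhalf; linarith
  have hωn0 : (ω : ℂ) ^ (d - 1) ≠ 0 := pow_ne_zero _ hω0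
  have hωd : ω ^ d = ω ^ (d - 1) * ω := by
    rw [← pow_succ]; congr 1; omega
  have hclear : (s * (ω + ad) - q) * (z * B ^ 2)
      = (ω ^ d * z + ad * ω ^ (d - 1)) * B ^ 2 * (B - r * ad) + ad ^ 2 * (r * D) * z := by
    linear_combination (z * B ^ 2) * hA + (ad * z * B) * hB + (ad * (B - r * ad)) * hzD
  have hinv : (s * (ω + ad) - q)
      = ((ω ^ d * z + ad * ω ^ (d - 1)) * B ^ 2 * (B - r * ad) + ad ^ 2 * (r * D) * z)
        / (z * B ^ 2) := by
    rw [eq_div_iff (mul_ne_zero hz0 (pow_ne_zero 2 hB0))]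
    exact hclear
  have h_eq : (s * (ω + ad) - q) / (B - r * ad)
      = ω ^ d + ad * ω ^ (d - 1) / z + ad ^ 2 * (r * D) / (B ^ 2 * (B - r * ad)) := by
    rw [hinv]
    generalize hu : B - r * ad = u at hBr0 ⊢
    field_simp
  set R₁ : ℂ := ad ^ 2 * (r * D) / (B ^ 2 * (B - r * ad)) with hR₁def
  set N : ℂ := R₁ / ω ^ (d - 1) - ω * E₂ - ad * S / (z * ω) - ad * E₂ / z + S ^ 2 / ω + S * E₂
    with hNdef
  clear_value R₁ N
  have hmaster : (s * (ω + ad) - q) / (-r * (ω + ad) + p) * (∏ j, (ω + a j))⁻¹ - ω - ad / z + S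
      = N / Q := by
    rw [hBrw, hPQ, h_eq, hNdef, hE₂def, hωd]
    field_simp
    ring_nf
    try tauto
  -- bounds on the six terms of N
  have hm2 : ‖ad‖ ^ 2 ≤ m ^ 2 :=
    pow_le_pow_left₀ (norm_nonneg ad) hmad 2
  have hT1 : ‖R₁ / ω ^ (d - 1)‖ ≤ c₁ * m ^ 2 := by
    have e1 : ‖R₁ / ω ^ (d - 1)‖
        = ‖ad‖ ^ 2 * ‖r * D‖
          / (aB ^ 2 * ‖B - r * ad‖ * aω ^ (d - 1)) := by
      rw [hR₁def]
      simp only [norm_div, norm_mul, norm_pow]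
      rw [← haB, ← haω]
      ring
    rw [e1, hc₁]
    calc ‖ad‖ ^ 2 * ‖r * D‖
          / (aB ^ 2 * ‖B - r * ad‖ * aω ^ (d - 1))
        ≤ m ^ 2 * ‖r * D‖ / (aB ^ 2 * (aB / 2) * aω ^ (d - 1)) := by
          gcongr <;> first
            | exact mul_pos (mul_pos (pow_pos haB0 2) (by linarith)) (pow_pos haω0 (d-1))
            | exact norm_nonneg _
            | exact hBr2
            | exact hm2
            | positivity
    _ = 2 * ‖r * D‖ / (aB ^ 3 * aω ^ (d - 1)) * m ^ 2 := by
          field_simp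
  have hT2 : ‖ω * E₂‖ ≤ c₂ * m ^ 2 := by
    rw [norm_mul, ← haω, hc₂, mul_assoc]
    exact mul_le_mul_of_nonneg_left hE₂ haω0.le
  have hT3 : ‖ad * S / (z * ω)‖ ≤ c₃ * m ^ 2 := by
    have e1 : ‖ad * S / (z * ω)‖ = ‖ad‖ * ‖S‖ / (aZ * aω) := by
      rw [norm_div, norm_mul, norm_mul, haZ, haω]
    rw [e1, hc₃]
    calc ‖ad‖ * ‖S‖ / (aZ * aω) ≤ m * (nR * m) / (aZ * aω) := by
          gcongr <;> first
            | exact mul_pos haZ0 haω0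
            | exact norm_nonneg _
            | exact hS
            | exact hmad
            | positivity
    _ = nR / (aZ * aω) * m ^ 2 := by field_simp
  have hT4 : ‖ad * E₂ / z‖ ≤ c₄ * m ^ 2 := by
    have e1 : ‖ad * E₂ / z‖ = ‖ad‖ * ‖E₂‖ / aZ := by
      rw [norm_div, norm_mul, haZ]
    rw [e1, hc₄]
    calc ‖ad‖ * ‖E₂‖ / aZ ≤ 1 * (K * m ^ 2) / aZ := by
          gcongr <;> first
            | exact haZ0
            | exact (norm_nonneg ad).trans (hmad.trans hm1)
            | exact hmad.trans hm1
            | exact hE₂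
            | positivity
    _ = K / aZ * m ^ 2 := by field_simp
  have hT5 : ‖S ^ 2 / ω‖ ≤ c₅ * m ^ 2 := by
    have e1 : ‖S ^ 2 / ω‖ = ‖S‖ ^ 2 / aω := by
      rw [norm_div, norm_pow, haω]
    rw [e1, hc₅]
    calc ‖S‖ ^ 2 / aω ≤ (nR * m) ^ 2 / aω := by
          gcongr <;> first
            | exact haω0
            | exact norm_nonneg _
            | exact hS
            | positivity
    _ = nR ^ 2 / aω * m ^ 2 := by field_simp
  have hT6 : ‖S * E₂‖ ≤ c₆ * m ^ 2 := by
    rw [norm_mul, hc₆]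
    calc ‖S‖ * ‖E₂‖ ≤ (nR * 1) * (K * m ^ 2) := by
          have h1 : ‖S‖ ≤ nR * 1 := by
            calc ‖S‖ ≤ nR * m := hS
            _ ≤ nR * 1 := mul_le_mul_of_nonneg_left hm1 (by linarith)
          exact mul_le_mul h1 hE₂ (norm_nonneg _) (by positivity)
    _ = nR * K * m ^ 2 := by ring
  have habsN : ‖N‖ ≤ (c₁ + c₂ + c₃ + c₄ + c₅ + c₆) * m ^ 2 := by
    have t1 : ‖N‖ ≤ ‖R₁ / ω ^ (d - 1) - ω * E₂ - ad * S / (z * ω)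
        - ad * E₂ / z + S ^ 2 / ω‖ + ‖S * E₂‖ := by
      rw [hNdef]; exact norm_add_le _ _
    have t2 : ‖R₁ / ω ^ (d - 1) - ω * E₂ - ad * S / (z * ω) - ad * E₂ / z + S ^ 2 / ω‖
        ≤ ‖R₁ / ω ^ (d - 1) - ω * E₂ - ad * S / (z * ω) - ad * E₂ / z‖
          + ‖S ^ 2 / ω‖ := norm_add_le _ _
    have t3 : ‖R₁ / ω ^ (d - 1) - ω * E₂ - ad * S / (z * ω) - ad * E₂ / z‖
        ≤ ‖R₁ / ω ^ (d - 1) - ω * E₂ - ad * S / (z * ω)‖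
          + ‖ad * E₂ / z‖ := norm_sub_le _ _
    have t4 : ‖R₁ / ω ^ (d - 1) - ω * E₂ - ad * S / (z * ω)‖
        ≤ ‖R₁ / ω ^ (d - 1) - ω * E₂‖ + ‖ad * S / (z * ω)‖ :=
      norm_sub_le _ _
    have t5 : ‖R₁ / ω ^ (d - 1) - ω * E₂‖
        ≤ ‖R₁ / ω ^ (d - 1)‖ + ‖ω * E₂‖ := norm_sub_le _ _
    linarith only [t1, t2, t3, t4, t5, hT1, hT2, hT3, hT4, hT5, hT6]
  rw [hmaster, norm_div]
  calc ‖N‖ / ‖Q‖ ≤ ‖N‖ / (1 / 2) := by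
        gcongr <;> first
          | exact norm_nonneg _
          | norm_num
          | exact hQhalf
  _ = 2 * ‖N‖ := by ring
  _ ≤ 2 * ((c₁ + c₂ + c₃ + c₄ + c₅ + c₆) * m ^ 2) := by linarith only [habsN]
  _ ≤ C₁ * m ^ 2 := by
        rw [hC₁]
        nlinarith only [sq_nonneg m]
end
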